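/- Well-posedness and unitarity of the feedback connection parametrizing GR-unitary realizations: let X, X~, E, E*, L, L' be complex Hilbert spaces. Let U_0 : X ⊕ E ⊕ L' → X ⊕ E* ⊕ L be a unitary operator with 3×3 block decomposition [U_{0,ij}] (rows indexed by X, E*, L; columns by X, E, L') whose (3,3)-block U_{0,33} : L' → L is zero, and let U~ = [[U~_{11}, U~_{12}], [U~_{21}, U~_{22}]] : X~ ⊕ L → X~ ⊕ L' be unitary. Define U : X ⊕ X~ ⊕ E → X ⊕ X~ ⊕ E* by the block matrix [[U_{0,11} + U_{0,13} U~_{22} U_{0,31}, U_{0,13} U~_{21}, U_{0,12} + U_{0,13} U~_{22} U_{0,32}], [U~_{12} U_{0,31}, U~_{11}, U~_{12} U_{0,32}], [U_{0,21} + U_{0,23} U~_{22} U_{0,31}, U_{0,23} U~_{21}, U_{0,22} + U_{0,23} U~_{22} U_{0,32}]]. Then: (i) U is unitary; (ii) for every (h, h~, e) ∈ X ⊕ X~ ⊕ E there exist unique ℓ ∈ L and ℓ' ∈ L' such that ℓ equals the L-component of U_0(h, e, ℓ') and ℓ' equals the L'-component of U~(h~, ℓ); and for these ℓ, ℓ'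 one has U(h, h~, e) = (h', h~', e*), where h' and e* are the X- and E*-components of U_0(h, e, ℓ') and h~' is the X~-component of U~(h~, ℓ). -/

import Mathlib

/-!
Since the `(3,3)`-block of `U₀` vanishes, the feedback loop is triangular: `ℓ` is read off from
`(h, e)` and then `ℓ'` from `(h~, ℓ)`; substituting them gives the block formula for `U`.
Adding the isometry identities of `U₀` at `(h, e, ℓ')` and of `U~` at `(h~, ℓ)`, the internal
signals `ℓ, ℓ'` cancel, so `U` is isometric. For surjectivity, the isometry of `U₀` together with
the zero `(3,3)`-block forces the input `ℓ'` to be determined by the `X`- and `E*`-outputs; so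
prescribing those outputs and solving `U~(h~, ℓ) = (b, ℓ')` closes the loop.
-/

open ContinuousLinearMap

section FeedbackRows

variable {R : Type*} [Semiring R]
  {X Xt E Y L L' : Type*}
  [TopologicalSpace X] [AddCommMonoid X] [Module R X]
  [TopologicalSpace Xt] [AddCommMonoid Xt] [Module R Xt]
  [TopologicalSpace E] [AddCommMonoid E] [Module R E]
  [TopologicalSpace Y] [AddCommMonoid Y] [Module R Y]
  [TopologicalSpace L] [AddCommMonoid L] [Module R L]
  [TopologicalSpace L'] [AddCommMonoid L'] [Module R L']

theorem feedback_outer_row_apply [ContinuousAdd Y]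
    (A : X →L[R] Y) (B : E →L[R] Y) (C : L' →L[R] Y)
    (P : Xt →L[R] L') (Q : L →L[R] L') (S : X →L[R] L) (T : E →L[R] L)
    (h : X) (ht : Xt) (e : E) :
    (A + C ∘L Q ∘L S) h + (C ∘L P) ht + (B + C ∘L Q ∘L T) e =
      A h + B e + C (P ht + Q (S h + T e)) := by
  simp only [add_apply, comp_apply, map_add]
  abel

theorem feedback_middle_row_apply (W : Xt →L[R] Y) (V : L →L[R] Y)
    (S : X →L[R] L) (T : E →L[R] L) (h : X) (ht : Xt) (e : E) :
    (V ∘L S) h + W ht + (V ∘L T) e = W ht + V (S h + T e) := by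
  simp only [comp_apply, map_add]
  abel

end FeedbackRows

section ZeroCornerIsometry

variable {𝕜 : Type*} [RCLike 𝕜] {X E F L L' : Type*}
  [NormedAddCommGroup X] [InnerProductSpace 𝕜 X]
  [NormedAddCommGroup E] [InnerProductSpace 𝕜 E]
  [NormedAddCommGroup F] [InnerProductSpace 𝕜 F]
  [NormedAddCommGroup L] [InnerProductSpace 𝕜 L]
  [NormedAddCommGroup L'] [InnerProductSpace 𝕜 L']
  {A11 : X →L[𝕜] X} {A12 : E →L[𝕜] X} {A13 : L' →L[𝕜] X}
  {A21 : X →L[𝕜] F} {A22 : E →L[𝕜] F} {A23 : L' →L[𝕜] F}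
  {A31 : X →L[𝕜] L} {A32 : E →L[𝕜] L}

theorem eq_zero_of_isometry_of_first_outputs_eq_zero
    (hiso : ∀ (x : X) (e : E) (l : L'),
      (inner 𝕜 (A11 x + A12 e + A13 l) (A11 x + A12 e + A13 l) : 𝕜) +
        (inner 𝕜 (A21 x + A22 e + A23 l) (A21 x + A22 e + A23 l) : 𝕜) +
        (inner 𝕜 (A31 x + A32 e) (A31 x + A32 e) : 𝕜)
      = (inner 𝕜 x x : 𝕜) + (inner 𝕜 e e : 𝕜) + (inner 𝕜 l l : 𝕜))
    {x : X} {e : E} {l : L'}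
    (h1 : A11 x + A12 e + A13 l = 0) (h2 : A21 x + A22 e + A23 l = 0) : l = 0 := by
  have hl := hiso x e l
  have h0 := hiso x e 0
  rw [h1, h2] at hl
  simp only [map_zero, add_zero, inner_zero_right, zero_add] at hl h0
  have hnorm𝕜 : (‖l‖ ^ 2 : 𝕜) = -‖A11 x + A12 e‖ ^ 2 - ‖A21 x + A22 e‖ ^ 2 := by
    simp only [← inner_self_eq_norm_sq_to_K]
    linear_combination h0 - hl
  have hnorm : ‖l‖ ^ 2 = -‖A11 x + A12 e‖ ^ 2 - ‖A21 x + A22 e‖ ^ 2 := by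
    exact_mod_cast hnorm𝕜
  have hsq : ‖l‖ ^ 2 ≤ 0 := by
    rw [hnorm]; linarith [sq_nonneg ‖A11 x + A12 e‖, sq_nonneg ‖A21 x + A22 e‖]
  exact norm_eq_zero.mp (pow_eq_zero_iff two_ne_zero |>.mp (le_antisymm hsq (sq_nonneg _)))

theorem eq_of_isometry_of_first_outputs_eq
    (hiso : ∀ (x : X) (e : E) (l : L'),
      (inner 𝕜 (A11 x + A12 e + A13 l) (A11 x + A12 e + A13 l) : 𝕜) +
        (inner 𝕜 (A21 x + A22 e + A23 l) (A21 x + A22 e + A23 l) : 𝕜) +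
        (inner 𝕜 (A31 x + A32 e) (A31 x + A32 e) : 𝕜)
      = (inner 𝕜 x x : 𝕜) + (inner 𝕜 e e : 𝕜) + (inner 𝕜 l l : 𝕜))
    {x x' : X} {e e' : E} {l l' : L'}
    (h1 : A11 x + A12 e + A13 l = A11 x' + A12 e' + A13 l')
    (h2 : A21 x + A22 e + A23 l = A21 x' + A22 e' + A23 l') : l = l' := by
  refine sub_eq_zero.mp (eq_zero_of_isometry_of_first_outputs_eq_zero hiso (x := x - x')
    (e := e - e') ?_ ?_)
  · simp only [map_sub]; rw [← sub_eq_zero.mpr h1]; abel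
  · simp only [map_sub]; rw [← sub_eq_zero.mpr h2]; abel

end ZeroCornerIsometry

section FeedbackConnection

variable {𝕜 : Type*} [RCLike 𝕜] {X Xt E F L L' : Type*}
  [NormedAddCommGroup X] [InnerProductSpace 𝕜 X]
  [NormedAddCommGroup Xt] [InnerProductSpace 𝕜 Xt]
  [NormedAddCommGroup E] [InnerProductSpace 𝕜 E]
  [NormedAddCommGroup F] [InnerProductSpace 𝕜 F]
  [NormedAddCommGroup L] [InnerProductSpace 𝕜 L]
  [NormedAddCommGroup L'] [InnerProductSpace 𝕜 L']
  {U011 : X →L[𝕜] X} {U012 : E →L[𝕜] X} {U013 : L' →L[𝕜] X}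
  {U021 : X →L[𝕜] F} {U022 : E →L[𝕜] F} {U023 : L' →L[𝕜] F}
  {U031 : X →L[𝕜] L} {U032 : E →L[𝕜] L}
  {Ut11 : Xt →L[𝕜] Xt} {Ut12 : L →L[𝕜] Xt} {Ut21 : Xt →L[𝕜] L'} {Ut22 : L →L[𝕜] L'}

theorem feedback_inner_eq
    (hU0iso : ∀ (x x' : X) (e e' : E) (l l'' : L'),
      (inner 𝕜 (U011 x + U012 e + U013 l) (U011 x' + U012 e' + U013 l'') : 𝕜) +
        (inner 𝕜 (U021 x + U022 e + U023 l) (U021 x' + U022 e' + U023 l'') : 𝕜) +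
        (inner 𝕜 (U031 x + U032 e) (U031 x' + U032 e') : 𝕜)
      = (inner 𝕜 x x' : 𝕜) + (inner 𝕜 e e' : 𝕜) + (inner 𝕜 l l'' : 𝕜))
    (hUtiso : ∀ (x x' : Xt) (l l' : L),
      (inner 𝕜 (Ut11 x + Ut12 l) (Ut11 x' + Ut12 l') : 𝕜) +
        (inner 𝕜 (Ut21 x + Ut22 l) (Ut21 x' + Ut22 l') : 𝕜)
      = (inner 𝕜 x x' : 𝕜) + (inner 𝕜 l l' : 𝕜))
    (h h' : X) (ht ht' : Xt) (e e' : E) :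
    (inner 𝕜 (U011 h + U012 e + U013 (Ut21 ht + Ut22 (U031 h + U032 e)))
        (U011 h' + U012 e' + U013 (Ut21 ht' + Ut22 (U031 h' + U032 e'))) : 𝕜) +
      (inner 𝕜 (Ut11 ht + Ut12 (U031 h + U032 e)) (Ut11 ht' + Ut12 (U031 h' + U032 e')) : 𝕜) +
      (inner 𝕜 (U021 h + U022 e + U023 (Ut21 ht + Ut22 (U031 h + U032 e)))
        (U021 h' + U022 e' + U023 (Ut21 ht' + Ut22 (U031 h' + U032 e'))) : 𝕜)
    = (inner 𝕜 h h' : 𝕜) + (inner 𝕜 ht ht' : 𝕜) + (inner 𝕜 e e' : 𝕜) := by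
  linear_combination hU0iso h h' e e' (Ut21 ht + Ut22 (U031 h + U032 e))
    (Ut21 ht' + Ut22 (U031 h' + U032 e')) + hUtiso ht ht' (U031 h + U032 e) (U031 h' + U032 e')

theorem feedback_surjective
    (hU0iso : ∀ (x : X) (e : E) (l : L'),
      (inner 𝕜 (U011 x + U012 e + U013 l) (U011 x + U012 e + U013 l) : 𝕜) +
        (inner 𝕜 (U021 x + U022 e + U023 l) (U021 x + U022 e + U023 l) : 𝕜) +
        (inner 𝕜 (U031 x + U032 e) (U031 x + U032 e) : 𝕜)
      = (inner 𝕜 x x : 𝕜) + (inner 𝕜 e e : 𝕜) + (inner 𝕜 l l : 𝕜))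
    (hU0surj : ∀ (a : X) (b : F) (c : L), ∃ (x : X) (e : E) (l : L'),
      U011 x + U012 e + U013 l = a ∧ U021 x + U022 e + U023 l = b ∧ U031 x + U032 e = c)
    (hUtsurj : ∀ (a : Xt) (b : L'), ∃ (x : Xt) (l : L),
      Ut11 x + Ut12 l = a ∧ Ut21 x + Ut22 l = b)
    (a : X) (b : Xt) (c : F) : ∃ (h : X) (ht : Xt) (e : E),
      U011 h + U012 e + U013 (Ut21 ht + Ut22 (U031 h + U032 e)) = a ∧
        Ut11 ht + Ut12 (U031 h + U032 e) = b ∧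
        U021 h + U022 e + U023 (Ut21 ht + Ut22 (U031 h + U032 e)) = c := by
  obtain ⟨h₀, e₀, l'₀, ha₀, hc₀, -⟩ := hU0surj a c 0
  obtain ⟨ht, l, hb, hl'₀⟩ := hUtsurj b l'₀
  obtain ⟨h, e, l', ha, hc, hl⟩ := hU0surj a c l
  have hl' : l' = l'₀ :=
    eq_of_isometry_of_first_outputs_eq hU0iso (ha.trans ha₀.symm) (hc.trans hc₀.symm)
  refine ⟨h, ht, e, ?_, ?_, ?_⟩ <;> rw [hl]
  · rwa [hl'₀, ← hl']
  · exact hb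
  · rwa [hl'₀, ← hl']

end FeedbackConnection

theorem feedback_connection_unitary
    {X Xt E F L L' : Type*}
    [NormedAddCommGroup X] [InnerProductSpace ℂ X]
    [NormedAddCommGroup Xt] [InnerProductSpace ℂ Xt]
    [NormedAddCommGroup E] [InnerProductSpace ℂ E]
    [NormedAddCommGroup F] [InnerProductSpace ℂ F]
    [NormedAddCommGroup L] [InnerProductSpace ℂ L]
    [NormedAddCommGroup L'] [InnerProductSpace ℂ L']
    (U011 : X →L[ℂ] X) (U012 : E →L[ℂ] X) (U013 : L' →L[ℂ] X)
    (U021 : X →L[ℂ] F) (U022 : E →L[ℂ] F) (U023 : L' →L[ℂ] F)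
    (U031 : X →L[ℂ] L) (U032 : E →L[ℂ] L)
    -- unitarity of `U₀` (with zero `(3,3)`-block): it preserves the `ℓ²` inner product
    -- of the direct sums and is surjective
    (hU0iso : ∀ (x x' : X) (e e' : E) (l l'' : L'),
      (inner ℂ (U011 x + U012 e + U013 l) (U011 x' + U012 e' + U013 l'') : ℂ) +
        (inner ℂ (U021 x + U022 e + U023 l) (U021 x' + U022 e' + U023 l'') : ℂ) +
        (inner ℂ (U031 x + U032 e) (U031 x' + U032 e') : ℂ)
      = (inner ℂ x x' : ℂ) + (inner ℂ e e' : ℂ) + (inner ℂ l l'' : ℂ))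
    (hU0surj : ∀ (a : X) (b : F) (c : L), ∃ (x : X) (e : E) (l : L'),
      U011 x + U012 e + U013 l = a ∧ U021 x + U022 e + U023 l = b ∧ U031 x + U032 e = c)
    (Ut11 : Xt →L[ℂ] Xt) (Ut12 : L →L[ℂ] Xt) (Ut21 : Xt →L[ℂ] L') (Ut22 : L →L[ℂ] L')
    -- unitarity of `U~`
    (hUtiso : ∀ (x x' : Xt) (l l' : L),
      (inner ℂ (Ut11 x + Ut12 l) (Ut11 x' + Ut12 l') : ℂ) +
        (inner ℂ (Ut21 x + Ut22 l) (Ut21 x' + Ut22 l') : ℂ)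
      = (inner ℂ x x' : ℂ) + (inner ℂ l l' : ℂ))
    (hUtsurj : ∀ (a : Xt) (b : L'), ∃ (x : Xt) (l : L),
      Ut11 x + Ut12 l = a ∧ Ut21 x + Ut22 l = b) :
    -- (i) the feedback-connected block operator `U` is unitary:
    ((∀ (h h' : X) (ht ht' : Xt) (e e' : E),
      (inner ℂ ((U011 + U013 ∘L Ut22 ∘L U031) h + (U013 ∘L Ut21) ht +
            (U012 + U013 ∘L Ut22 ∘L U032) e)
          ((U011 + U013 ∘L Ut22 ∘L U031) h' + (U013 ∘L Ut21) ht' +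
            (U012 + U013 ∘L Ut22 ∘L U032) e') : ℂ) +
        (inner ℂ ((Ut12 ∘L U031) h + Ut11 ht + (Ut12 ∘L U032) e)
          ((Ut12 ∘L U031) h' + Ut11 ht' + (Ut12 ∘L U032) e') : ℂ) +
        (inner ℂ ((U021 + U023 ∘L Ut22 ∘L U031) h + (U023 ∘L Ut21) ht +
            (U022 + U023 ∘L Ut22 ∘L U032) e)
          ((U021 + U023 ∘L Ut22 ∘L U031) h' + (U023 ∘L Ut21) ht' +
            (U022 + U023 ∘L Ut22 ∘L U032) e') : ℂ)
      = (inner ℂ h h' : ℂ) + (inner ℂ ht ht' : ℂ) + (inner ℂ e e' : ℂ)) ∧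
    (∀ (a : X) (b : Xt) (c : F), ∃ (h : X) (ht : Xt) (e : E),
      (U011 + U013 ∘L Ut22 ∘L U031) h + (U013 ∘L Ut21) ht +
          (U012 + U013 ∘L Ut22 ∘L U032) e = a ∧
        (Ut12 ∘L U031) h + Ut11 ht + (Ut12 ∘L U032) e = b ∧
        (U021 + U023 ∘L Ut22 ∘L U031) h + (U023 ∘L Ut21) ht +
          (U022 + U023 ∘L Ut22 ∘L U032) e = c)) ∧
    -- (ii) the feedback loop is well posed and `U` agrees with the composite system:
    (∀ (h : X) (ht : Xt) (e : E),
      (∃! p : L × L', p.1 = U031 h + U032 e ∧ p.2 = Ut21 ht + Ut22 p.1) ∧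
      ∀ (l : L) (l' : L'), l = U031 h + U032 e → l' = Ut21 ht + Ut22 l →
        (U011 + U013 ∘L Ut22 ∘L U031) h + (U013 ∘L Ut21) ht +
            (U012 + U013 ∘L Ut22 ∘L U032) e = U011 h + U012 e + U013 l' ∧
          (Ut12 ∘L U031) h + Ut11 ht + (Ut12 ∘L U032) e = Ut11 ht + Ut12 l ∧
          (U021 + U023 ∘L Ut22 ∘L U031) h + (U023 ∘L Ut21) ht +
            (U022 + U023 ∘L Ut22 ∘L U032) e = U021 h + U022 e + U023 l') := by
  simp only [feedback_outer_row_apply, feedback_middle_row_apply]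
  refine ⟨⟨feedback_inner_eq hU0iso hUtiso,
    feedback_surjective (fun x e l => hU0iso x x e e l l) hU0surj hUtsurj⟩,
    fun h ht e => ⟨?_, ?_⟩⟩
  · refine ⟨(U031 h + U032 e, Ut21 ht + Ut22 (U031 h + U032 e)), ⟨rfl, rfl⟩, ?_⟩
    rintro ⟨l, l'⟩ ⟨rfl, hl'⟩
    exact Prod.ext rfl hl'
  · rintro l l' rfl rfl
    exact ⟨rfl, rfl, rfl⟩
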